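/- arXiv:2206.04844 — 5 statements merged into one kernel-verified Lean document; each statement's English description precedes it below -/
import Mathlib

section
/- Let K > 4 be an integer divisible by 4. Then there does not exist a constant τ > 0 such that dist(Z, F) ≤ τ·p(Z) for all Z ∈ Ω; that is, the error bound dist(Z,F) ≤ τ p(Z) fails on the set Ω of triples of trace-zero doubly stochastic matrices. -/
noncomputable section

abbrev Mat (K : ℕ) := Matrix (Fin K) (Fin K) ℝ

/-- Frobenius (entrywise) inner product of two `K × K` real matrices. -/
def frob {K : ℕ} (X Y : Mat K) : ℝ := ∑ i, ∑ j, X i j * Y i j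

/-- Trace-zero doubly stochastic `K × K` matrices. -/
def DK (K : ℕ) : Set (Mat K) :=
  {X | (∀ i j, 0 ≤ X i j) ∧ (∀ i, ∑ j, X i j = 1) ∧ (∀ j, ∑ i, X i j = 1) ∧ (∑ i, X i i = 0)}

/-- `Ω = D_K × D_K × D_K`. -/
def OmegaSet (K : ℕ) : Set (Mat K × Mat K × Mat K) :=
  {Z | Z.1 ∈ DK K ∧ Z.2.1 ∈ DK K ∧ Z.2.2 ∈ DK K}

/-- The ℓ₁ penalty term `p(Z) = ⟨X₁,X₂⟩ + ⟨X₁,X₃⟩ + ⟨X₂,X₃⟩`. -/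
def pTriple {K : ℕ} (Z : Mat K × Mat K × Mat K) : ℝ :=
  frob Z.1 Z.2.1 + frob Z.1 Z.2.2 + frob Z.2.1 Z.2.2

/-- The feasible region `F = {Z ∈ Ω : p(Z) = 0}`. -/
def Fset (K : ℕ) : Set (Mat K × Mat K × Mat K) :=
  {Z | Z ∈ OmegaSet K ∧ pTriple Z = 0}

/-- The norm `‖Z‖ = (‖X₁‖_F² + ‖X₂‖_F² + ‖X₃‖_F²)^{1/2}` on triples of matrices. -/
def norm3 {K : ℕ} (Z : Mat K × Mat K × Mat K) : ℝ :=
  Real.sqrt (frob Z.1 Z.1 + frob Z.2.1 Z.2.1 + frob Z.2.2 Z.2.2)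

/-- `dist(Z, F) = inf_{W ∈ F} ‖Z - W‖`. -/
def distF {K : ℕ} (Z : Mat K × Mat K × Mat K) : ℝ :=
  sInf {d : ℝ | ∃ W ∈ Fset K, d = norm3 (Z - W)}

/-- `(X₁*)_{ij} = 1` iff `i - j = 3K/4` or `j - i = K/4`. -/
def X1star (K : ℕ) : Mat K := Matrix.of fun i j =>
  if (i : ℤ) - (j : ℤ) = 3 * ((K : ℤ) / 4) ∨ (j : ℤ) - (i : ℤ) = (K : ℤ) / 4 then (1 : ℝ) else 0

/-- `(X₂*)_{ij} = 1` iff `|i - j| = K/2`. -/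
def X2star (K : ℕ) : Mat K := Matrix.of fun i j =>
  if (i : ℤ) - (j : ℤ) = (K : ℤ) / 2 ∨ (j : ℤ) - (i : ℤ) = (K : ℤ) / 2 then (1 : ℝ) else 0

/-- `(X₃*)_{ij} = 1` iff `i - j = K/4` or `j - i = 3K/4`. -/
def X3star (K : ℕ) : Mat K := Matrix.of fun i j =>
  if (i : ℤ) - (j : ℤ) = (K : ℤ) / 4 ∨ (j : ℤ) - (i : ℤ) = 3 * ((K : ℤ) / 4) then (1 : ℝ) else 0

def Zstar (K : ℕ) : Mat K × Mat K × Mat K := (X1star K, X2star K, X3star K)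

/-- The perturbed matrix `X₁(ε)`. -/
def X1eps (K : ℕ) (ε : ℝ) : Mat K := Matrix.of fun i j =>
  if (i : ℤ) - (j : ℤ) = 3 * ((K : ℤ) / 4) ∨ (j : ℤ) - (i : ℤ) = (K : ℤ) / 4 then 1 - ε
  else if (i : ℤ) - (j : ℤ) = 3 * ((K : ℤ) / 4) - 1 ∨ (j : ℤ) - (i : ℤ) = (K : ℤ) / 4 + 1 then ε
  else 0

/-- The perturbed matrix `X₃(ε)`. -/
def X3eps (K : ℕ) (ε : ℝ) : Mat K := Matrix.of fun i j =>
  if (i : ℤ) - (j : ℤ) = (K : ℤ) / 4 ∨ (j : ℤ) - (i : ℤ) = 3 * ((K : ℤ) / 4) then 1 - ε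
  else if (i : ℤ) - (j : ℤ) = 3 * ((K : ℤ) / 4) - 1 ∨ (j : ℤ) - (i : ℤ) = (K : ℤ) / 4 + 1 then ε
  else 0

def Zeps (K : ℕ) (ε : ℝ) : Mat K × Mat K × Mat K := (X1eps K ε, X2star K, X3eps K ε)

open Finset in
lemma pat_row_sum {K : ℕ} (a b : ℤ) (hab : a + b = (K : ℤ)) (hb0 : 0 < b) (hbK : b < (K : ℤ))
    (c : ℝ) (i : Fin K) :
    ∑ j : Fin K, (if (i : ℤ) - (j : ℤ) = a ∨ (j : ℤ) - (i : ℤ) = b then c else 0) = c := by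
  have hi := i.isLt
  obtain ⟨jn, hlt, hor⟩ : ∃ jn : ℕ, jn < K ∧ ((jn : ℤ) = (i : ℤ) + b ∨ (jn : ℤ) = (i : ℤ) + b - (K : ℤ)) := by
    by_cases hc : (i : ℤ) + b < (K : ℤ)
    · exact ⟨(i : ℕ) + b.toNat, by omega, by omega⟩
    · exact ⟨(i : ℕ) + b.toNat - K, by omega, by omega⟩
  set j0 : Fin K := ⟨jn, hlt⟩ with hj0
  have key : ∀ j : Fin K, ((i : ℤ) - (j : ℤ) = a ∨ (j : ℤ) - (i : ℤ) = b) ↔ j = j0 := by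
    intro j
    have hj := j.isLt
    rw [Fin.ext_iff]
    simp only [hj0]
    omega
  calc ∑ j : Fin K, (if (i : ℤ) - (j : ℤ) = a ∨ (j : ℤ) - (i : ℤ) = b then c else 0)
      = ∑ j : Fin K, (if j = j0 then c else 0) :=
        Finset.sum_congr rfl fun j _ => if_congr (key j) rfl rfl
    _ = c := by rw [Finset.sum_ite_eq' univ j0 (fun _ => c)]; simp

open Finset in
lemma pat_col_sum {K : ℕ} (a b : ℤ) (hab : a + b = (K : ℤ)) (hb0 : 0 < b) (hbK : b < (K : ℤ))
    (c : ℝ) (j : Fin K) :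
    ∑ i : Fin K, (if (i : ℤ) - (j : ℤ) = a ∨ (j : ℤ) - (i : ℤ) = b then c else 0) = c := by
  have hj := j.isLt
  obtain ⟨im, hlt, hor⟩ : ∃ im : ℕ, im < K ∧ ((im : ℤ) = (j : ℤ) - b ∨ (im : ℤ) = (j : ℤ) - b + (K : ℤ)) := by
    by_cases hc : 0 ≤ (j : ℤ) - b
    · exact ⟨(j : ℕ) - b.toNat, by omega, by omega⟩
    · exact ⟨(j : ℕ) + K - b.toNat, by omega, by omega⟩
  set i0 : Fin K := ⟨im, hlt⟩ with hi0
  have key : ∀ i : Fin K, ((i : ℤ) - (j : ℤ) = a ∨ (j : ℤ) - (i : ℤ) = b) ↔ i = i0 := by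
    intro i
    have hi := i.isLt
    rw [Fin.ext_iff]
    simp only [hi0]
    omega
  calc ∑ i : Fin K, (if (i : ℤ) - (j : ℤ) = a ∨ (j : ℤ) - (i : ℤ) = b then c else 0)
      = ∑ i : Fin K, (if i = i0 then c else 0) :=
        Finset.sum_congr rfl fun i _ => if_congr (key i) rfl rfl
    _ = c := by rw [Finset.sum_ite_eq' univ i0 (fun _ => c)]; simp

lemma X1star_mem {K : ℕ} (hK : 4 < K) (hdiv : 4 ∣ K) : X1star K ∈ DK K := by
  refine ⟨?_, ?_, ?_, ?_⟩
  · intro i j; simp only [X1star, Matrix.of_apply]; split_ifs <;> norm_num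
  · intro i
    simp only [X1star, Matrix.of_apply]
    exact pat_row_sum _ _ (by omega) (by omega) (by omega) 1 i
  · intro j
    simp only [X1star, Matrix.of_apply]
    exact pat_col_sum _ _ (by omega) (by omega) (by omega) 1 j
  · apply Finset.sum_eq_zero
    intro i _
    simp only [X1star, Matrix.of_apply]
    rw [if_neg]; omega

lemma X2star_mem {K : ℕ} (hK : 4 < K) (hdiv : 4 ∣ K) : X2star K ∈ DK K := by
  refine ⟨?_, ?_, ?_, ?_⟩
  · intro i j; simp only [X2star, Matrix.of_apply]; split_ifs <;> norm_num
  · intro i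
    simp only [X2star, Matrix.of_apply]
    exact pat_row_sum _ _ (by omega) (by omega) (by omega) 1 i
  · intro j
    simp only [X2star, Matrix.of_apply]
    exact pat_col_sum _ _ (by omega) (by omega) (by omega) 1 j
  · apply Finset.sum_eq_zero
    intro i _
    simp only [X2star, Matrix.of_apply]
    rw [if_neg]; omega

lemma X3star_mem {K : ℕ} (hK : 4 < K) (hdiv : 4 ∣ K) : X3star K ∈ DK K := by
  refine ⟨?_, ?_, ?_, ?_⟩
  · intro i j; simp only [X3star, Matrix.of_apply]; split_ifs <;> norm_num
  · intro i
    simp only [X3star, Matrix.of_apply]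
    exact pat_row_sum _ _ (by omega) (by omega) (by omega) 1 i
  · intro j
    simp only [X3star, Matrix.of_apply]
    exact pat_col_sum _ _ (by omega) (by omega) (by omega) 1 j
  · apply Finset.sum_eq_zero
    intro i _
    simp only [X3star, Matrix.of_apply]
    rw [if_neg]; omega

lemma X1eps_split {K : ℕ} (hK : 4 < K) (hdiv : 4 ∣ K) (ε : ℝ) (i j : Fin K) :
    X1eps K ε i j =
      (if (i : ℤ) - (j : ℤ) = 3 * ((K : ℤ) / 4) ∨ (j : ℤ) - (i : ℤ) = (K : ℤ) / 4 then (1 - ε : ℝ) else 0)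
      + (if (i : ℤ) - (j : ℤ) = 3 * ((K : ℤ) / 4) - 1 ∨ (j : ℤ) - (i : ℤ) = (K : ℤ) / 4 + 1 then (ε : ℝ) else 0) := by
  simp only [X1eps, Matrix.of_apply]
  split_ifs <;> first | (exfalso; omega) | ring

lemma X3eps_split {K : ℕ} (hK : 4 < K) (hdiv : 4 ∣ K) (ε : ℝ) (i j : Fin K) :
    X3eps K ε i j =
      (if (i : ℤ) - (j : ℤ) = (K : ℤ) / 4 ∨ (j : ℤ) - (i : ℤ) = 3 * ((K : ℤ) / 4) then (1 - ε : ℝ) else 0)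
      + (if (i : ℤ) - (j : ℤ) = 3 * ((K : ℤ) / 4) - 1 ∨ (j : ℤ) - (i : ℤ) = (K : ℤ) / 4 + 1 then (ε : ℝ) else 0) := by
  simp only [X3eps, Matrix.of_apply]
  split_ifs <;> first | (exfalso; omega) | ring

lemma X1eps_mem {K : ℕ} (hK : 4 < K) (hdiv : 4 ∣ K) (ε : ℝ) (hε0 : 0 ≤ ε) (hε1 : ε ≤ 1) :
    X1eps K ε ∈ DK K := by
  refine ⟨?_, ?_, ?_, ?_⟩
  · intro i j; simp only [X1eps, Matrix.of_apply]; split_ifs <;> linarith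
  · intro i
    rw [Finset.sum_congr rfl fun j _ => X1eps_split hK hdiv ε i j, Finset.sum_add_distrib,
      pat_row_sum _ _ (by omega) (by omega) (by omega) _ i,
      pat_row_sum _ _ (by omega) (by omega) (by omega) _ i]
    ring
  · intro j
    rw [Finset.sum_congr rfl fun i _ => X1eps_split hK hdiv ε i j, Finset.sum_add_distrib,
      pat_col_sum _ _ (by omega) (by omega) (by omega) _ j,
      pat_col_sum _ _ (by omega) (by omega) (by omega) _ j]
    ring
  · apply Finset.sum_eq_zero
    intro i _
    simp only [X1eps, Matrix.of_apply]
    rw [if_neg (by omega), if_neg (by omega)]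

lemma X3eps_mem {K : ℕ} (hK : 4 < K) (hdiv : 4 ∣ K) (ε : ℝ) (hε0 : 0 ≤ ε) (hε1 : ε ≤ 1) :
    X3eps K ε ∈ DK K := by
  refine ⟨?_, ?_, ?_, ?_⟩
  · intro i j; simp only [X3eps, Matrix.of_apply]; split_ifs <;> linarith
  · intro i
    rw [Finset.sum_congr rfl fun j _ => X3eps_split hK hdiv ε i j, Finset.sum_add_distrib,
      pat_row_sum _ _ (by omega) (by omega) (by omega) _ i,
      pat_row_sum _ _ (by omega) (by omega) (by omega) _ i]
    ring
  · intro j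
    rw [Finset.sum_congr rfl fun i _ => X3eps_split hK hdiv ε i j, Finset.sum_add_distrib,
      pat_col_sum _ _ (by omega) (by omega) (by omega) _ j,
      pat_col_sum _ _ (by omega) (by omega) (by omega) _ j]
    ring
  · apply Finset.sum_eq_zero
    intro i _
    simp only [X3eps, Matrix.of_apply]
    rw [if_neg (by omega), if_neg (by omega)]

lemma frob_nonneg {K : ℕ} {X Y : Mat K} (hX : ∀ i j, 0 ≤ X i j) (hY : ∀ i j, 0 ≤ Y i j) :
    0 ≤ frob X Y :=
  Finset.sum_nonneg fun i _ => Finset.sum_nonneg fun j _ => mul_nonneg (hX i j) (hY i j)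

lemma frob_self_nonneg {K : ℕ} (X : Mat K) : 0 ≤ frob X X :=
  Finset.sum_nonneg fun i _ => Finset.sum_nonneg fun j _ => mul_self_nonneg _

lemma sq_le_frob {K : ℕ} (X : Mat K) (i j : Fin K) : X i j * X i j ≤ frob X X := by
  unfold frob
  calc X i j * X i j ≤ ∑ j', X i j' * X i j' :=
        Finset.single_le_sum (fun j' _ => mul_self_nonneg (X i j')) (Finset.mem_univ j)
    _ ≤ ∑ i', ∑ j', X i' j' * X i' j' :=
        Finset.single_le_sum (fun i' _ => Finset.sum_nonneg fun j' _ => mul_self_nonneg (X i' j'))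
          (Finset.mem_univ i)

lemma abs_le_norm3_fst {K : ℕ} (Z : Mat K × Mat K × Mat K) (i j : Fin K) :
    |Z.1 i j| ≤ norm3 Z := by
  unfold norm3
  rw [← Real.sqrt_sq_eq_abs]
  apply Real.sqrt_le_sqrt
  have h1 := sq_le_frob Z.1 i j
  have h2 := frob_self_nonneg Z.2.1
  have h3 := frob_self_nonneg Z.2.2
  nlinarith [sq_nonneg (Z.1 i j)]

lemma abs_le_norm3_trd {K : ℕ} (Z : Mat K × Mat K × Mat K) (i j : Fin K) :
    |Z.2.2 i j| ≤ norm3 Z := by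
  unfold norm3
  rw [← Real.sqrt_sq_eq_abs]
  apply Real.sqrt_le_sqrt
  have h1 := sq_le_frob Z.2.2 i j
  have h2 := frob_self_nonneg Z.1
  have h3 := frob_self_nonneg Z.2.1
  nlinarith [sq_nonneg (Z.2.2 i j)]

lemma Zstar_mem_Fset {K : ℕ} (hK : 4 < K) (hdiv : 4 ∣ K) : Zstar K ∈ Fset K := by
  refine ⟨⟨X1star_mem hK hdiv, X2star_mem hK hdiv, X3star_mem hK hdiv⟩, ?_⟩
  have e12 : frob (X1star K) (X2star K) = 0 := by
    apply Finset.sum_eq_zero; intro i _; apply Finset.sum_eq_zero; intro j _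
    simp only [X1star, X2star, Matrix.of_apply]
    split_ifs <;> first | (exfalso; omega) | ring
  have e13 : frob (X1star K) (X3star K) = 0 := by
    apply Finset.sum_eq_zero; intro i _; apply Finset.sum_eq_zero; intro j _
    simp only [X1star, X3star, Matrix.of_apply]
    split_ifs <;> first | (exfalso; omega) | ring
  have e23 : frob (X2star K) (X3star K) = 0 := by
    apply Finset.sum_eq_zero; intro i _; apply Finset.sum_eq_zero; intro j _
    simp only [X2star, X3star, Matrix.of_apply]
    split_ifs <;> first | (exfalso; omega) | ring
  show frob (X1star K) (X2star K) + frob (X1star K) (X3star K) + frob (X2star K) (X3star K) = 0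
  rw [e12, e13, e23]; ring

lemma Zeps_mem_Omega {K : ℕ} (hK : 4 < K) (hdiv : 4 ∣ K) (ε : ℝ) (hε0 : 0 ≤ ε) (hε1 : ε ≤ 1) :
    Zeps K ε ∈ OmegaSet K :=
  ⟨X1eps_mem hK hdiv ε hε0 hε1, X2star_mem hK hdiv, X3eps_mem hK hdiv ε hε0 hε1⟩

lemma pTriple_Zeps_le {K : ℕ} (hK : 4 < K) (hdiv : 4 ∣ K) (ε : ℝ) (hε0 : 0 ≤ ε) (hε1 : ε ≤ 1) :
    pTriple (Zeps K ε) ≤ (K : ℝ) * (K : ℝ) * (ε * ε) := by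
  have e12 : frob (X1eps K ε) (X2star K) = 0 := by
    apply Finset.sum_eq_zero; intro i _; apply Finset.sum_eq_zero; intro j _
    simp only [X1eps, X2star, Matrix.of_apply]
    split_ifs <;> first | (exfalso; omega) | ring
  have e23 : frob (X2star K) (X3eps K ε) = 0 := by
    apply Finset.sum_eq_zero; intro i _; apply Finset.sum_eq_zero; intro j _
    simp only [X2star, X3eps, Matrix.of_apply]
    split_ifs <;> first | (exfalso; omega) | ring
  have e13 : frob (X1eps K ε) (X3eps K ε) ≤ (K : ℝ) * (K : ℝ) * (ε * ε) := by
    have hb : ∀ i j : Fin K, X1eps K ε i j * X3eps K ε i j ≤ ε * ε := by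
      intro i j
      simp only [X1eps, X3eps, Matrix.of_apply]
      split_ifs <;> first | (exfalso; omega) | nlinarith [mul_self_nonneg ε]
    calc frob (X1eps K ε) (X3eps K ε) ≤ ∑ _i : Fin K, ∑ _j : Fin K, ε * ε :=
          Finset.sum_le_sum fun i _ => Finset.sum_le_sum fun j _ => hb i j
      _ = (K : ℝ) * (K : ℝ) * (ε * ε) := by
          simp [Finset.sum_const, mul_assoc]
  show frob (X1eps K ε) (X2star K) + frob (X1eps K ε) (X3eps K ε) + frob (X2star K) (X3eps K ε)
      ≤ (K : ℝ) * (K : ℝ) * (ε * ε)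
  rw [e12, e23]
  linarith

lemma key_est {K : ℕ} (hK : 4 < K) (hdiv : 4 ∣ K) (ε : ℝ) (hε0 : 0 ≤ ε)
    (W : Mat K × Mat K × Mat K) (hW : W ∈ Fset K) :
    ε ≤ norm3 (Zeps K ε - W) := by
  obtain ⟨⟨h1, h2, h3⟩, hp⟩ := hW
  set i0 : Fin K := ⟨0, by omega⟩ with hi0
  set j0 : Fin K := ⟨K / 4 + 1, by omega⟩ with hj0
  have hi0n : (i0 : ℕ) = 0 := rfl
  have hj0n : (j0 : ℕ) = K / 4 + 1 := rfl
  have hi0v : (i0 : ℤ) = 0 := by omega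
  have hj0v : (j0 : ℤ) = (K : ℤ) / 4 + 1 := by omega
  have hX1 : X1eps K ε i0 j0 = ε := by
    simp only [X1eps, Matrix.of_apply, hi0v, hj0v]
    rw [if_neg (by omega), if_pos (by omega)]
  have hX3 : X3eps K ε i0 j0 = ε := by
    simp only [X3eps, Matrix.of_apply, hi0v, hj0v]
    rw [if_neg (by omega), if_pos (by omega)]
  -- frob W.1 W.2.2 = 0
  have nn12 : 0 ≤ frob W.1 W.2.1 := frob_nonneg h1.1 h2.1
  have nn13 : 0 ≤ frob W.1 W.2.2 := frob_nonneg h1.1 h3.1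
  have nn23 : 0 ≤ frob W.2.1 W.2.2 := frob_nonneg h2.1 h3.1
  have hp' : frob W.1 W.2.1 + frob W.1 W.2.2 + frob W.2.1 W.2.2 = 0 := hp
  have h13 : frob W.1 W.2.2 = 0 := by linarith
  have hzero : W.1 i0 j0 * W.2.2 i0 j0 = 0 := by
    have houter := (Finset.sum_eq_zero_iff_of_nonneg
      (fun i _ => Finset.sum_nonneg fun j _ => mul_nonneg (h1.1 i j) (h3.1 i j))).mp h13 i0
      (Finset.mem_univ i0)
    exact (Finset.sum_eq_zero_iff_of_nonneg
      (fun j _ => mul_nonneg (h1.1 i0 j) (h3.1 i0 j))).mp houter j0 (Finset.mem_univ j0)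
  have hd1 : (Zeps K ε - W).1 i0 j0 = ε - W.1 i0 j0 := by
    simp [Zeps, Matrix.sub_apply, hX1]
  have hd3 : (Zeps K ε - W).2.2 i0 j0 = ε - W.2.2 i0 j0 := by
    simp [Zeps, Matrix.sub_apply, hX3]
  rcases mul_eq_zero.mp hzero with hz | hz
  · have := abs_le_norm3_fst (Zeps K ε - W) i0 j0
    rw [hd1, hz, sub_zero, abs_of_nonneg hε0] at this
    exact this
  · have := abs_le_norm3_trd (Zeps K ε - W) i0 j0
    rw [hd3, hz, sub_zero, abs_of_nonneg hε0] at this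
    exact this

/-- **Theorem 2.1.** For `K > 4` divisible by `4`, there is no `τ > 0` with
`dist(Z, F) ≤ τ · p(Z)` for all `Z ∈ Ω`: the error bound fails. -/
theorem error_bound_fails (K : ℕ) (hK : 4 < K) (hdiv : 4 ∣ K) :
    ¬ ∃ τ : ℝ, 0 < τ ∧ ∀ Z ∈ OmegaSet K, distF Z ≤ τ * pTriple Z := by
  rintro ⟨τ, hτ, hbound⟩
  have hK0 : (0 : ℝ) < K := by positivity
  set ε : ℝ := min 1 (1 / (2 * τ * (K : ℝ) * (K : ℝ))) with hε
  have hden : 0 < 2 * τ * (K : ℝ) * (K : ℝ) := by positivity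
  have hε0 : 0 < ε := lt_min one_pos (by positivity)
  have hε1 : ε ≤ 1 := min_le_left _ _
  have hεle : ε ≤ 1 / (2 * τ * (K : ℝ) * (K : ℝ)) := min_le_right _ _
  have hΩ : Zeps K ε ∈ OmegaSet K := Zeps_mem_Omega hK hdiv ε hε0.le hε1
  have hp : pTriple (Zeps K ε) ≤ (K : ℝ) * (K : ℝ) * (ε * ε) := pTriple_Zeps_le hK hdiv ε hε0.le hε1
  have hd : ε ≤ distF (Zeps K ε) := by
    apply le_csInf
    · exact ⟨norm3 (Zeps K ε - Zstar K), Zstar K, Zstar_mem_Fset hK hdiv, rfl⟩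
    · rintro d ⟨W, hW, rfl⟩
      exact key_est hK hdiv ε hε0.le W hW
  have hchain : ε ≤ τ * ((K : ℝ) * (K : ℝ) * (ε * ε)) :=
    le_trans (le_trans hd (hbound _ hΩ)) (by nlinarith)
  have hsmall : 2 * τ * (K : ℝ) * (K : ℝ) * ε ≤ 1 := by
    rw [div_eq_inv_mul] at hεle
    rw [mul_one] at hεle
    calc 2 * τ * (K : ℝ) * (K : ℝ) * ε ≤ 2 * τ * (K : ℝ) * (K : ℝ) * (2 * τ * (K : ℝ) * (K : ℝ))⁻¹ := by
          exact mul_le_mul_of_nonneg_left hεle hden.le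
      _ = 1 := mul_inv_cancel₀ hden.ne'
  nlinarith
end
end

section
/- Let K > 4 be an integer divisible by 4 and let ε ∈ (0,1). Then Z(ε) ∈ Ω (i.e., X_1(ε), X_2*, X_3(ε) are trace-zero doubly stochastic matrices) and p(Z(ε)) = K·ε²; in particular ⟨X_1(ε),X_2*⟩ = ⟨X_3(ε),X_2*⟩ = 0 and ⟨X_1(ε),X_3(ε)⟩ = K·ε². -/
noncomputable section

section AuxZ
variable {K : ℕ}

def finOf (K : ℕ) [NeZero K] (v : ZMod K) : Fin K := ⟨v.val, ZMod.val_lt v⟩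

lemma finOf_cast [NeZero K] (v : ZMod K) : (((finOf K v : Fin K) : ℕ) : ZMod K) = v :=
  ZMod.natCast_rightInverse v

lemma cast_eq_iff [NeZero K] (j : Fin K) (v : ZMod K) :
    ((j : ℕ) : ZMod K) = v ↔ j = finOf K v := by
  constructor
  · intro h
    apply Fin.ext
    have h2 := congrArg ZMod.val h
    rwa [ZMod.val_cast_of_lt j.isLt] at h2
  · rintro rfl; exact finOf_cast v

lemma natCast_ne [NeZero K] {a b : ℕ} (h : a < b) (hb : b < K) :
    (a : ZMod K) ≠ (b : ZMod K) := by
  intro hh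
  have h0 : ((b - a : ℕ) : ZMod K) = 0 := by
    rw [Nat.cast_sub h.le, ← hh]; ring
  rw [ZMod.natCast_eq_zero_iff] at h0
  have := Nat.le_of_dvd (by omega) h0
  omega

def cshift (K : ℕ) [NeZero K] (i : Fin K) (s : ℕ) : Fin K :=
  finOf K (((i : ℕ) : ZMod K) + (s : ZMod K))

lemma cshift_inj [NeZero K] (i : Fin K) {s t : ℕ} (h : s < t) (ht : t < K) :
    cshift K i s ≠ cshift K i t := by
  intro hh
  have h2 : ((i : ℕ) : ZMod K) + (s : ZMod K) = ((i : ℕ) : ZMod K) + (t : ZMod K) := by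
    have h3 := congrArg (fun x : Fin K => ((x : ℕ) : ZMod K)) hh
    simpa [cshift, finOf_cast] using h3
  exact natCast_ne h ht (add_left_cancel h2)

lemma ne_cshift [NeZero K] (i : Fin K) {s : ℕ} (h0 : 0 < s) (hs : s < K) :
    i ≠ cshift K i s := by
  intro hh
  have h2 : ((i : ℕ) : ZMod K) = ((i : ℕ) : ZMod K) + (s : ZMod K) :=
    (cast_eq_iff i _).2 hh
  have h3 : ((0 : ℕ) : ZMod K) = (s : ZMod K) := by
    simpa using (left_eq_add.mp h2).symm
  exact natCast_ne h0 hs h3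

lemma cond_iff [NeZero K] {s : ℕ} (h0 : 0 < s) (hs : s < K) (i j : Fin K) :
    ((i : ℤ) - (j : ℤ) = (K : ℤ) - (s : ℤ) ∨ (j : ℤ) - (i : ℤ) = (s : ℤ)) ↔
      j = cshift K i s := by
  rw [cshift, ← cast_eq_iff]
  have hzm : (((j : ℕ) : ZMod K) = ((i : ℕ) : ZMod K) + (s : ZMod K)) ↔
      ((K : ℤ) ∣ (((i : ℕ) : ℤ) + (s : ℤ) - ((j : ℕ) : ℤ))) := by
    rw [show ((i : ℕ) : ZMod K) + (s : ZMod K) = ((((i : ℕ) : ℤ) + (s : ℤ) : ℤ) : ZMod K) by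
          push_cast; ring,
        show ((j : ℕ) : ZMod K) = (((j : ℕ) : ℤ) : ZMod K) by push_cast; ring,
        ZMod.intCast_eq_intCast_iff_dvd_sub]
  rw [hzm]
  have hi := i.isLt
  have hj := j.isLt
  constructor
  · rintro (h | h)
    · exact ⟨1, by omega⟩
    · exact ⟨0, by omega⟩
  · rintro ⟨t, ht⟩
    have hK0 : (0 : ℤ) < K := by omega
    have h1 : (K : ℤ) * t < 2 * K := by omega
    have h2 : -(K : ℤ) < K * t := by omega
    have ht2 : t = 0 ∨ t = 1 := by
      rcases lt_trichotomy t 0 with h | h | h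
      · exfalso; nlinarith
      · left; exact h
      · rcases eq_or_lt_of_le (by omega : (1:ℤ) ≤ t) with h' | h'
        · right; exact h'.symm
        · exfalso; nlinarith
    rcases ht2 with rfl | rfl
    · right; omega
    · left; omega

lemma cshift_symm [NeZero K] {s : ℕ} (hs : s < K) (i j : Fin K) :
    j = cshift K i s ↔ i = cshift K j (K - s) := by
  have hKs : ((K - s : ℕ) : ZMod K) = -(s : ZMod K) := by
    rw [Nat.cast_sub hs.le, ZMod.natCast_self]; ring
  simp only [cshift, ← cast_eq_iff, hKs]
  constructor <;> intro h <;> linear_combination -h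

lemma sum_ite_two {x y : ℝ} (a b : Fin K) (hab : a ≠ b) :
    ∑ j : Fin K, (if j = a then x else if j = b then y else 0) = x + y := by
  have h : ∀ j : Fin K, (if j = a then x else if j = b then y else 0)
      = (if j = a then x else 0) + (if j = b then y else 0) := by
    intro j
    by_cases h1 : j = a
    · subst h1; simp [hab]
    · by_cases h2 : j = b <;> simp [h1, h2, Ne.symm hab]
  simp only [h, Finset.sum_add_distrib, Finset.sum_ite_eq', Finset.mem_univ, if_true]

end AuxZ

/-- `Z(ε) ∈ Ω` and `p(Z(ε)) = K ε²`; in particular `⟨X₁(ε),X₂*⟩ = ⟨X₃(ε),X₂*⟩ = 0`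
and `⟨X₁(ε),X₃(ε)⟩ = K ε²`. -/
theorem Zeps_in_Omega_and_penalty (K : ℕ) (hK : 4 < K) (hdiv : 4 ∣ K)
    (ε : ℝ) (hε : ε ∈ Set.Ioo (0 : ℝ) 1) :
    Zeps K ε ∈ OmegaSet K ∧
    pTriple (Zeps K ε) = (K : ℝ) * ε ^ 2 ∧
    frob (X1eps K ε) (X2star K) = 0 ∧
    frob (X3eps K ε) (X2star K) = 0 ∧
    frob (X1eps K ε) (X3eps K ε) = (K : ℝ) * ε ^ 2 := by

  obtain ⟨m, hm⟩ := hdiv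
  have hm2 : 2 ≤ m := by omega
  haveI : NeZero K := ⟨by omega⟩
  have hε0 := hε.1
  have hε1 := hε.2
  -- entrywise descriptions
  have hX1 : ∀ i j : Fin K, X1eps K ε i j =
      (if j = cshift K i m then 1 - ε else if j = cshift K i (m + 1) then ε else 0) := by
    intro i j
    have c1 : ((i : ℤ) - (j : ℤ) = 3 * ((K : ℤ) / 4) ∨ (j : ℤ) - (i : ℤ) = (K : ℤ) / 4) ↔
        j = cshift K i m := by
      rw [← cond_iff (by omega) (by omega) i j]; omega
    have c2 : ((i : ℤ) - (j : ℤ) = 3 * ((K : ℤ) / 4) - 1 ∨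
        (j : ℤ) - (i : ℤ) = (K : ℤ) / 4 + 1) ↔ j = cshift K i (m + 1) := by
      rw [← cond_iff (by omega) (by omega) i j]; push_cast; omega
    simp only [X1eps, Matrix.of_apply, c1, c2]
  have hX2 : ∀ i j : Fin K, X2star K i j =
      (if j = cshift K i (2 * m) then 1 else 0) := by
    intro i j
    have c1 : ((i : ℤ) - (j : ℤ) = (K : ℤ) / 2 ∨ (j : ℤ) - (i : ℤ) = (K : ℤ) / 2) ↔
        j = cshift K i (2 * m) := by
      rw [← cond_iff (by omega) (by omega) i j]; push_cast; omega
    simp only [X2star, Matrix.of_apply, c1]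
  have hX3 : ∀ i j : Fin K, X3eps K ε i j =
      (if j = cshift K i (3 * m) then 1 - ε else if j = cshift K i (m + 1) then ε else 0) := by
    intro i j
    have c1 : ((i : ℤ) - (j : ℤ) = (K : ℤ) / 4 ∨ (j : ℤ) - (i : ℤ) = 3 * ((K : ℤ) / 4)) ↔
        j = cshift K i (3 * m) := by
      rw [← cond_iff (by omega) (by omega) i j]; push_cast; omega
    have c2 : ((i : ℤ) - (j : ℤ) = 3 * ((K : ℤ) / 4) - 1 ∨
        (j : ℤ) - (i : ℤ) = (K : ℤ) / 4 + 1) ↔ j = cshift K i (m + 1) := by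
      rw [← cond_iff (by omega) (by omega) i j]; push_cast; omega
    simp only [X3eps, Matrix.of_apply, c1, c2]
  -- membership of a two-shift matrix in DK
  have memDK : ∀ (s t : ℕ) (x y : ℝ), 0 < s → s < t → t < K → 0 ≤ x → 0 ≤ y → x + y = 1 →
      (fun (M : Mat K) => M ∈ DK K)
        (Matrix.of fun i j => if j = cshift K i s then x else if j = cshift K i t then y else 0) := by
    intro s t x y hs hst ht hx hy hxy
    refine ⟨?_, ?_, ?_, ?_⟩
    · intro i j
      simp only [Matrix.of_apply]
      split_ifs <;> linarith
    · intro i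
      simp only [Matrix.of_apply]
      rw [sum_ite_two _ _ (cshift_inj i hst ht), hxy]
    · intro j
      have hrw : ∀ i : Fin K,
          (if j = cshift K i s then x else if j = cshift K i t then y else 0)
          = (if i = cshift K j (K - s) then x else if i = cshift K j (K - t) then y else 0) := by
        intro i
        rw [if_congr (cshift_symm (by omega) i j) rfl
          (if_congr (cshift_symm (by omega) i j) rfl rfl)]
      simp only [Matrix.of_apply, hrw]
      rw [sum_ite_two _ _ (cshift_inj j (show K - t < K - s by omega) (by omega)).symm]
      linarith
    · apply Finset.sum_eq_zero
      intro i _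
      simp only [Matrix.of_apply]
      rw [if_neg (ne_cshift i (by omega) (by omega)), if_neg (ne_cshift i (by omega) (by omega))]
  -- the three matrices as two-shift / one-shift matrices
  have hX1eq : X1eps K ε = Matrix.of fun i j =>
      if j = cshift K i m then 1 - ε else if j = cshift K i (m + 1) then ε else 0 := by
    ext i j; exact hX1 i j
  have hX3eq : X3eps K ε = Matrix.of fun i j =>
      if j = cshift K i (3 * m) then 1 - ε else if j = cshift K i (m + 1) then ε else 0 := by
    ext i j; exact hX3 i j
  have hmem1 : X1eps K ε ∈ DK K := by
    rw [hX1eq]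
    exact memDK m (m + 1) (1 - ε) ε (by omega) (by omega) (by omega)
      (by linarith) (by linarith) (by ring)
  have hmem3 : X3eps K ε ∈ DK K := by
    rw [hX3eq]
    have h := memDK (m + 1) (3 * m) ε (1 - ε) (by omega) (by omega) (by omega)
      (by linarith) (by linarith) (by ring)
    -- reorder the two branches
    have hswap : (Matrix.of fun i j : Fin K =>
        if j = cshift K i (3 * m) then 1 - ε else if j = cshift K i (m + 1) then ε else 0)
        = Matrix.of fun i j : Fin K =>
        if j = cshift K i (m + 1) then ε else if j = cshift K i (3 * m) then 1 - ε else 0 := by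
      ext i j
      simp only [Matrix.of_apply]
      by_cases h1 : j = cshift K i (m + 1)
      · subst h1
        have h2 : cshift K i (m + 1) ≠ cshift K i (3 * m) :=
          cshift_inj i (by omega) (by omega)
        simp [h2]
      · simp [h1]
    rw [hswap]; exact h
  have hmem2 : X2star K ∈ DK K := by
    refine ⟨?_, ?_, ?_, ?_⟩
    · intro i j; rw [hX2]; split_ifs <;> norm_num
    · intro i
      simp only [hX2]
      simp [Finset.sum_ite_eq']
    · intro j
      have hrw : ∀ i : Fin K, X2star K i j = (if i = cshift K j (K - 2 * m) then (1:ℝ) else 0) := by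
        intro i
        rw [hX2, if_congr (cshift_symm (by omega) i j) rfl rfl]
      simp only [hrw]
      simp [Finset.sum_ite_eq']
    · apply Finset.sum_eq_zero
      intro i _
      rw [hX2, if_neg (ne_cshift i (by omega) (by omega))]
  -- the frobenius products
  have f12 : frob (X1eps K ε) (X2star K) = 0 := by
    unfold frob
    apply Finset.sum_eq_zero; intro i _
    apply Finset.sum_eq_zero; intro j _
    rw [hX1, hX2]
    by_cases hC : j = cshift K i (2 * m)
    · have hA : j ≠ cshift K i m := by
        rw [hC]; exact (cshift_inj i (show m < 2 * m by omega) (by omega)).symm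
      have hB : j ≠ cshift K i (m + 1) := by
        rw [hC]; exact (cshift_inj i (show m + 1 < 2 * m by omega) (by omega)).symm
      simp [hA, hB]
    · simp [hC]
  have f32 : frob (X3eps K ε) (X2star K) = 0 := by
    unfold frob
    apply Finset.sum_eq_zero; intro i _
    apply Finset.sum_eq_zero; intro j _
    rw [hX3, hX2]
    by_cases hC : j = cshift K i (2 * m)
    · have hA : j ≠ cshift K i (3 * m) := by
        rw [hC]; exact cshift_inj i (show 2 * m < 3 * m by omega) (by omega)
      have hB : j ≠ cshift K i (m + 1) := by
        rw [hC]; exact (cshift_inj i (show m + 1 < 2 * m by omega) (by omega)).symm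
      simp [hA, hB]
    · simp [hC]
  have f23 : frob (X2star K) (X3eps K ε) = 0 := by
    unfold frob
    apply Finset.sum_eq_zero; intro i _
    apply Finset.sum_eq_zero; intro j _
    rw [hX3, hX2]
    by_cases hC : j = cshift K i (2 * m)
    · have hA : j ≠ cshift K i (3 * m) := by
        rw [hC]; exact cshift_inj i (show 2 * m < 3 * m by omega) (by omega)
      have hB : j ≠ cshift K i (m + 1) := by
        rw [hC]; exact (cshift_inj i (show m + 1 < 2 * m by omega) (by omega)).symm
      simp [hA, hB]
    · simp [hC]
  have f13 : frob (X1eps K ε) (X3eps K ε) = (K : ℝ) * ε ^ 2 := by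
    unfold frob
    have hpt : ∀ i j : Fin K, X1eps K ε i j * X3eps K ε i j
        = (if j = cshift K i (m + 1) then ε * ε else 0) := by
      intro i j
      rw [hX1, hX3]
      by_cases hB : j = cshift K i (m + 1)
      · subst hB
        have hA : cshift K i (m + 1) ≠ cshift K i m :=
          (cshift_inj i (show m < m + 1 by omega) (by omega)).symm
        have hC : cshift K i (m + 1) ≠ cshift K i (3 * m) :=
          cshift_inj i (show m + 1 < 3 * m by omega) (by omega)
        simp [hA, hC]
      · by_cases hA : j = cshift K i m
        · subst hA
          have hC : cshift K i m ≠ cshift K i (3 * m) :=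
            cshift_inj i (show m < 3 * m by omega) (by omega)
          simp [hB, hC]
        · simp [hA, hB]
    simp only [hpt]
    have hinner : ∀ i : Fin K,
        (∑ j : Fin K, if j = cshift K i (m + 1) then ε * ε else 0) = ε * ε := by
      intro i; simp [Finset.sum_ite_eq']
    simp only [hinner, Finset.sum_const, Finset.card_univ, Fintype.card_fin, nsmul_eq_mul]
    ring
  refine ⟨⟨hmem1, hmem2, hmem3⟩, ?_, f12, f32, f13⟩
  show frob (X1eps K ε) (X2star K) + frob (X1eps K ε) (X3eps K ε)
      + frob (X2star K) (X3eps K ε) = (K : ℝ) * ε ^ 2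
  rw [f12, f13, f23]; ring
end
end

section
/- Let K > 4 be an integer divisible by 4 and let ε ∈ (0,1). If Z̃ = (X̃_1, X̃_2, X̃_3) ∈ Ω is such that the support of X̃_1 contains the support of X_1(ε) and the support of X̃_3 contains the support of X_3(ε) (i.e., (X_i(ε))_{jk} ≠ 0 implies (X̃_i)_{jk} ≠ 0 for i ∈ {1,3}), then ⟨X̃_1, X̃_3⟩ > 0; in particular Z̃ ∉ F. -/
noncomputable section

/-- If `Z̃ ∈ Ω` with `supp X̃₁ ⊇ supp X₁(ε)` and `supp X̃₃ ⊇ supp X₃(ε)`, then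
`⟨X̃₁, X̃₃⟩ > 0`; in particular `Z̃ ∉ F`. -/
theorem support_containment_infeasible (K : ℕ) (hK : 4 < K) (hdiv : 4 ∣ K)
    (ε : ℝ) (hε : ε ∈ Set.Ioo (0 : ℝ) 1)
    (Zt : Mat K × Mat K × Mat K) (hZt : Zt ∈ OmegaSet K)
    (hsupp1 : ∀ j k, X1eps K ε j k ≠ 0 → Zt.1 j k ≠ 0)
    (hsupp3 : ∀ j k, X3eps K ε j k ≠ 0 → Zt.2.2 j k ≠ 0) :
    0 < frob Zt.1 Zt.2.2 ∧ Zt ∉ Fset K := by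
  obtain ⟨m, rfl⟩ := hdiv
  have hm : 2 ≤ m := by omega
  set i : Fin (4 * m) := ⟨0, by omega⟩ with hidef
  set j : Fin (4 * m) := ⟨m + 1, by omega⟩ with hjdef
  have hi : (i : ℤ) = 0 := by simp [hidef]
  have hj : (j : ℤ) = (m : ℤ) + 1 := by simp [hjdef]
  have hq : ((4 * m : ℕ) : ℤ) / 4 = (m : ℤ) := by push_cast; omega
  have h1 : X1eps (4 * m) ε i j = ε := by
    simp only [X1eps, Matrix.of_apply, hi, hj, hq]
    rw [if_neg, if_pos]
    · right; ring
    · push_neg; constructor <;> omega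
  have h3 : X3eps (4 * m) ε i j = ε := by
    simp only [X3eps, Matrix.of_apply, hi, hj, hq]
    rw [if_neg, if_pos]
    · right; ring
    · push_neg; constructor <;> omega
  have hε0 : ε ≠ 0 := ne_of_gt hε.1
  obtain ⟨h1Ω, h2Ω, h3Ω⟩ := hZt
  have hx1 : Zt.1 i j ≠ 0 := hsupp1 i j (by rw [h1]; exact hε0)
  have hx3 : Zt.2.2 i j ≠ 0 := hsupp3 i j (by rw [h3]; exact hε0)
  have hpos1 : 0 < Zt.1 i j := lt_of_le_of_ne (h1Ω.1 i j) (Ne.symm hx1)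
  have hpos3 : 0 < Zt.2.2 i j := lt_of_le_of_ne (h3Ω.1 i j) (Ne.symm hx3)
  have hnn : ∀ (A B : Mat (4 * m)), (∀ a b, 0 ≤ A a b) → (∀ a b, 0 ≤ B a b) →
      0 ≤ frob A B := by
    intro A B hA hB
    apply Finset.sum_nonneg; intro a _
    apply Finset.sum_nonneg; intro b _
    exact mul_nonneg (hA a b) (hB a b)
  have hfrob : 0 < frob Zt.1 Zt.2.2 := by
    unfold frob
    apply Finset.sum_pos'
    · intro a _
      apply Finset.sum_nonneg; intro b _
      exact mul_nonneg (h1Ω.1 a b) (h3Ω.1 a b)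
    · refine ⟨i, Finset.mem_univ i, ?_⟩
      apply Finset.sum_pos'
      · intro b _; exact mul_nonneg (h1Ω.1 i b) (h3Ω.1 i b)
      · exact ⟨j, Finset.mem_univ j, mul_pos hpos1 hpos3⟩
  refine ⟨hfrob, ?_⟩
  intro hF
  have hp := hF.2
  have h12 : 0 ≤ frob Zt.1 Zt.2.1 := hnn _ _ h1Ω.1 h2Ω.1
  have h23 : 0 ≤ frob Zt.2.1 Zt.2.2 := hnn _ _ h2Ω.1 h3Ω.1
  unfold pTriple at hp
  linarith
end
end

section
/- (Lemma 3.2) For every β ∈ ℝ, the penalty problem min_{z ∈ Ω} f_β(z) admits an extreme-point optimal solution: there exists z* = (x_1*,…,x_n*) ∈ Ω such that x_i* is an extreme point of Ω_i^+ for every i and f_β(z*) ≤ f_β(z) for all z ∈ Ω. -/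
/-! The minimizers of a continuous concave function on a nonempty compact convex set form a
nonempty compact face, whose extreme points (Krein–Milman) are extreme points of the set; so the
minimum is attained at an extreme point. Since `p` is multi-affine, so is `f_β`; starting from a
global minimizer of `f_β` on `Ω`, replacing one block at a time by an extreme point minimizing the
restriction of `f_β` to that block never increases `f_β`. -/

noncomputable section

/-- Dot product on `ℝ^m`. -/
def dotp {m : ℕ} (x y : Fin m → ℝ) : ℝ := ∑ k, x k * y k

/-- The ℓ₁ penalty term `p(z) = Σ_{i<j} ⟨x_i, x_j⟩`. -/
def pen {n m : ℕ} (z : Fin n → Fin m → ℝ) : ℝ :=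
  ∑ i : Fin n, ∑ j : Fin n, if i < j then dotp (z i) (z j) else 0

/-- `f` is multi-affine: affine in each block when the others are fixed. -/
def MultiAffine {n m : ℕ} (f : (Fin n → Fin m → ℝ) → ℝ) : Prop :=
  ∀ (i : Fin n) (z : Fin n → Fin m → ℝ) (x y : Fin m → ℝ) (t : ℝ),
    f (Function.update z i (t • x + (1 - t) • y)) =
      t * f (Function.update z i x) + (1 - t) * f (Function.update z i y)

/-- Membership in `Ω = Ω₁⁺ × ⋯ × Ωₙ⁺`. -/
def InOmega {n m : ℕ} (Om : Fin n → Set (Fin m → ℝ)) (z : Fin n → Fin m → ℝ) : Prop :=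
  ∀ i, z i ∈ Om i

/-- Feasibility for (P): `z ∈ Ω` and `⟨x_i, x_j⟩ = 0` for all `i ≠ j`. -/
def Feas {n m : ℕ} (Om : Fin n → Set (Fin m → ℝ)) (z : Fin n → Fin m → ℝ) : Prop :=
  InOmega Om z ∧ ∀ i j, i ≠ j → dotp (z i) (z j) = 0

/-- `S^opt`: global minimizers of `f` over the feasible region of (P). -/
def SOpt {n m : ℕ} (Om : Fin n → Set (Fin m → ℝ)) (f : (Fin n → Fin m → ℝ) → ℝ) :
    Set (Fin n → Fin m → ℝ) :=
  {z | Feas Om z ∧ ∀ w, Feas Om w → f z ≤ f w}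

/-- `S_β^opt`: global minimizers of `f_β = f + β p` over `Ω`. -/
def SBeta {n m : ℕ} (Om : Fin n → Set (Fin m → ℝ)) (f : (Fin n → Fin m → ℝ) → ℝ) (β : ℝ) :
    Set (Fin n → Fin m → ℝ) :=
  {z | InOmega Om z ∧ ∀ w, InOmega Om w → f z + β * pen z ≤ f w + β * pen w}

open Set Function

section ConcaveMin

variable {E : Type*} [AddCommGroup E] [Module ℝ E] {s : Set E} {h : E → ℝ} {x₀ : E}

theorem ConcaveOn.isExtreme_inter_preimage_Iic (hh : ConcaveOn ℝ s h) (hx₀ : IsMinOn h s x₀) :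
    IsExtreme ℝ s (s ∩ h ⁻¹' Iic (h x₀)) := by
  refine ⟨inter_subset_left, fun x₁ hx₁ x₂ hx₂ x ⟨hx, hxmin⟩ hseg => ⟨hx₁, ?_⟩⟩
  obtain ⟨a, b, ha, hb, hab, rfl⟩ := hseg
  have hconc : a * h x₁ + b * h x₂ ≤ h (a • x₁ + b • x₂) :=
    hh.2 hx₁ hx₂ ha.le hb.le hab
  have h₂ : h x₀ ≤ h x₂ := hx₀ hx₂
  have hx' : h (a • x₁ + b • x₂) ≤ h x₀ := hxmin
  have : a * h x₁ ≤ a * h x₀ := by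
    linarith [mul_le_mul_of_nonneg_left h₂ hb.le, congrArg (· * h x₀) hab]
  exact le_of_mul_le_mul_left this ha

variable [TopologicalSpace E] [T2Space E] [IsTopologicalAddGroup E] [ContinuousSMul ℝ E]
  [LocallyConvexSpace ℝ E]

theorem IsCompact.exists_extremePoint_isMinOn_of_concaveOn (hs : IsCompact s)
    (hne : s.Nonempty) (hc : ContinuousOn h s) (hh : ConcaveOn ℝ s h) :
    ∃ x ∈ s.extremePoints ℝ, IsMinOn h s x := by
  obtain ⟨x₀, hx₀s, hx₀⟩ := hs.exists_isMinOn hne hc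
  have hM : IsCompact (s ∩ h ⁻¹' Iic (h x₀)) :=
    hs.of_isClosed_subset (hc.preimage_isClosed_of_isClosed hs.isClosed isClosed_Iic)
      inter_subset_left
  obtain ⟨x, hx⟩ := hM.extremePoints_nonempty ⟨x₀, hx₀s, show h x₀ ≤ h x₀ from le_rfl⟩
  exact ⟨x, (hh.isExtreme_inter_preimage_Iic hx₀).extremePoints_subset_extremePoints hx,
    fun y hy => le_trans (b := h x₀) hx.1.2 (hx₀ hy)⟩

end ConcaveMin

section BlockMin

variable {ι : Type*} [DecidableEq ι] {E : ι → Type*} [∀ i, AddCommGroup (E i)]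
  [∀ i, Module ℝ (E i)] [∀ i, TopologicalSpace (E i)] [∀ i, T2Space (E i)]
  [∀ i, IsTopologicalAddGroup (E i)] [∀ i, ContinuousSMul ℝ (E i)]
  [∀ i, LocallyConvexSpace ℝ (E i)] {s : ∀ i, Set (E i)} {g : (∀ i, E i) → ℝ}

theorem exists_update_extremePoint_le (hs : ∀ i, IsCompact (s i)) (hg : Continuous g)
    {z : ∀ i, E i} (hz : z ∈ univ.pi s) (i : ι) (hconc : ConcaveOn ℝ (s i) (g ∘ update z i)) :
    ∃ x ∈ (s i).extremePoints ℝ, g (update z i x) ≤ g z := by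
  obtain ⟨x, hx, hmin⟩ := (hs i).exists_extremePoint_isMinOn_of_concaveOn ⟨z i, hz i trivial⟩
    (by fun_prop) hconc
  refine ⟨x, hx, ?_⟩
  simpa using hmin (hz i trivial)

theorem exists_extremePoints_le_of_mem_pi (hs : ∀ i, IsCompact (s i)) (hg : Continuous g)
    (hconc : ∀ z ∈ univ.pi s, ∀ i, ConcaveOn ℝ (s i) (g ∘ update z i))
    {z : ∀ i, E i} (hz : z ∈ univ.pi s) (S : Finset ι) :
    ∃ z' ∈ univ.pi s, (∀ i ∈ S, z' i ∈ (s i).extremePoints ℝ) ∧ g z' ≤ g z := by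
  induction S using Finset.induction_on with
  | empty => exact ⟨z, hz, by simp, le_rfl⟩
  | insert i S _ ih =>
    obtain ⟨z', hz', hext, hle⟩ := ih
    obtain ⟨x, hx, hxle⟩ := exists_update_extremePoint_le hs hg hz' i (hconc z' hz' i)
    refine ⟨update z' i x, ?_, ?_, hxle.trans hle⟩
    · exact (update_mem_pi_iff_of_mem hz').2 fun _ => hx.1
    · intro j hj
      rcases eq_or_ne j i with rfl | hji
      · simpa using hx
      · rw [update_of_ne hji]
        exact hext j ((Finset.mem_insert.1 hj).resolve_left hji)

theorem exists_forall_extremePoints_isMinOn_pi [Fintype ι] (hs : ∀ i, IsCompact (s i))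
    (hne : ∀ i, (s i).Nonempty) (hg : Continuous g)
    (hconc : ∀ z ∈ univ.pi s, ∀ i, ConcaveOn ℝ (s i) (g ∘ update z i)) :
    ∃ z, (∀ i, z i ∈ (s i).extremePoints ℝ) ∧ IsMinOn g (univ.pi s) z := by
  obtain ⟨z₀, hz₀, hmin⟩ :=
    (isCompact_univ_pi hs).exists_isMinOn (univ_pi_nonempty_iff.2 hne) hg.continuousOn
  obtain ⟨z, hz, hext, hle⟩ := exists_extremePoints_le_of_mem_pi hs hg hconc hz₀ Finset.univ
  exact ⟨z, fun i => hext i (Finset.mem_univ i), fun w hw => hle.trans (hmin hw)⟩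

end BlockMin

section MultiAffine

variable {n m : ℕ}

theorem MultiAffine.add {f g : (Fin n → Fin m → ℝ) → ℝ} (hf : MultiAffine f)
    (hg : MultiAffine g) : MultiAffine fun z => f z + g z := by
  intro i z x y t
  simp only [hf i z x y t, hg i z x y t]
  ring

theorem MultiAffine.const_mul {f : (Fin n → Fin m → ℝ) → ℝ} (hf : MultiAffine f) (c : ℝ) :
    MultiAffine fun z => c * f z := by
  intro i z x y t
  simp only [hf i z x y t]
  ring

theorem multiAffine_const (c : ℝ) : MultiAffine fun _ : Fin n → Fin m → ℝ => c := by
  intro i z x y t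
  ring

theorem multiAffine_finsetSum {α : Type*} (S : Finset α) {F : α → (Fin n → Fin m → ℝ) → ℝ}
    (hF : ∀ a ∈ S, MultiAffine (F a)) : MultiAffine fun z => ∑ a ∈ S, F a z := by
  intro i z x y t
  simp only [Finset.mul_sum, ← Finset.sum_add_distrib]
  exact Finset.sum_congr rfl fun a ha => hF a ha i z x y t

theorem dotp_eq_dotProduct (x y : Fin m → ℝ) : dotp x y = x ⬝ᵥ y := rfl

theorem multiAffine_dotp_apply {a b : Fin n} (hab : a ≠ b) :
    MultiAffine fun z : Fin n → Fin m → ℝ => dotp (z a) (z b) := by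
  intro i z x y t
  simp only [dotp_eq_dotProduct]
  rcases eq_or_ne a i with rfl | hai
  · simp only [update_self, update_of_ne hab.symm, add_dotProduct, smul_dotProduct, smul_eq_mul]
  rcases eq_or_ne b i with rfl | hbi
  · simp only [update_self, update_of_ne hab, dotProduct_add, dotProduct_smul, smul_eq_mul]
  simp only [update_of_ne hai, update_of_ne hbi]
  ring

theorem multiAffine_pen : MultiAffine (pen : (Fin n → Fin m → ℝ) → ℝ) := by
  refine multiAffine_finsetSum _ fun a _ => multiAffine_finsetSum _ fun b _ => ?_
  by_cases hab : a < b
  · simpa only [hab, if_true] using multiAffine_dotp_apply hab.ne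
  · simpa only [hab, if_false] using multiAffine_const 0

theorem continuous_pen : Continuous (pen : (Fin n → Fin m → ℝ) → ℝ) := by
  refine continuous_finsetSum _ fun a _ => continuous_finsetSum _ fun b _ => ?_
  by_cases hab : a < b <;> simp only [hab, if_true, if_false, dotp] <;> fun_prop

theorem MultiAffine.concaveOn_update {f : (Fin n → Fin m → ℝ) → ℝ} (hf : MultiAffine f)
    {s : Set (Fin m → ℝ)} (hs : Convex ℝ s) (z : Fin n → Fin m → ℝ) (i : Fin n) :
    ConcaveOn ℝ s (f ∘ update z i) := by
  refine ⟨hs, fun x _ y _ a b _ _ hab => le_of_eq ?_⟩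
  obtain rfl : b = 1 - a := by linarith
  simp only [comp_apply, hf i z x y a, smul_eq_mul]

end MultiAffine

theorem extreme_point_optimal_solution_general (n m : ℕ)
    (Om : Fin n → Set (Fin m → ℝ))
    (hne : ∀ i, (Om i).Nonempty) (hcpt : ∀ i, IsCompact (Om i))
    (hcvx : ∀ i, Convex ℝ (Om i))
    (f : (Fin n → Fin m → ℝ) → ℝ) (hf : MultiAffine f) (hfc : Continuous f)
    (β : ℝ) :
    ∃ z : Fin n → Fin m → ℝ,
      (∀ i, z i ∈ Set.extremePoints ℝ (Om i)) ∧
      ∀ w, InOmega Om w → f z + β * pen z ≤ f w + β * pen w := by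
  have hfβ : MultiAffine fun z => f z + β * pen z := hf.add (multiAffine_pen.const_mul β)
  obtain ⟨z, hext, hmin⟩ := exists_forall_extremePoints_isMinOn_pi hcpt hne
    (hfc.add (continuous_const.mul continuous_pen))
    fun z _ i => hfβ.concaveOn_update (hcvx i) z i
  exact ⟨z, hext, fun w hw => hmin (mem_univ_pi.2 hw)⟩

/-- **Lemma 3.2.** For every `β ∈ ℝ`, the penalty problem admits an extreme-point
optimal solution. -/
theorem extreme_point_optimal_solution (n m : ℕ) (hn : 2 ≤ n) (hm : 1 ≤ m)
    (Om : Fin n → Set (Fin m → ℝ))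
    (hne : ∀ i, (Om i).Nonempty) (hcpt : ∀ i, IsCompact (Om i))
    (hcvx : ∀ i, Convex ℝ (Om i))
    (hnonneg : ∀ i, ∀ x ∈ Om i, ∀ k, 0 ≤ x k)
    (f : (Fin n → Fin m → ℝ) → ℝ) (hf : MultiAffine f) (hfc : Continuous f)
    (β : ℝ) :
    ∃ z : Fin n → Fin m → ℝ,
      (∀ i, z i ∈ Set.extremePoints ℝ (Om i)) ∧
      ∀ w, InOmega Om w → f z + β * pen z ≤ f w + β * pen w :=
  extreme_point_optimal_solution_general n m Om hne hcpt hcvx f hf hfc β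
end
end

section
/- Let β ∈ ℝ be such that the set S̄_β^opt of extreme-point optimal solutions of the penalty problem is nonempty and satisfies S̄_β^opt ⊆ S^opt. Then S^opt ⊆ S_β^opt; i.e., every optimal solution of the complementarity-constrained problem (P) is optimal for the penalty problem (P_β). -/
noncomputable section

/-- If the set of extreme-point optimal solutions of (P_β) is nonempty and contained in
`S^opt`, then `S^opt ⊆ S_β^opt`. -/
theorem SOpt_subset_SBeta (n m : ℕ) (hn : 2 ≤ n) (hm : 1 ≤ m)
    (Om : Fin n → Set (Fin m → ℝ))
    (hne : ∀ i, (Om i).Nonempty) (hcpt : ∀ i, IsCompact (Om i))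
    (hcvx : ∀ i, Convex ℝ (Om i))
    (hnonneg : ∀ i, ∀ x ∈ Om i, ∀ k, 0 ≤ x k)
    (f : (Fin n → Fin m → ℝ) → ℝ) (hf : MultiAffine f) (hfc : Continuous f)
    (β : ℝ)
    (hSbarNe : ∃ z ∈ SBeta Om f β, ∀ i, z i ∈ Set.extremePoints ℝ (Om i))
    (hSbarSub : ∀ z ∈ SBeta Om f β, (∀ i, z i ∈ Set.extremePoints ℝ (Om i)) → z ∈ SOpt Om f) :
    SOpt Om f ⊆ SBeta Om f β := by
  intro z hz
  obtain ⟨zb, hzb, hext⟩ := hSbarNe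
  have hzbOpt := hSbarSub zb hzb hext
  have hpen : ∀ w, Feas Om w → pen w = 0 := by
    intro w hw
    unfold pen
    refine Finset.sum_eq_zero fun i _ => Finset.sum_eq_zero fun j _ => ?_
    split
    · exact hw.2 i j (by omega)
    · rfl
  refine ⟨hz.1.1, fun w hw => ?_⟩
  rw [hpen z hz.1]
  calc f z + β * 0 = f z := by ring
    _ ≤ f zb := hz.2 zb hzbOpt.1
    _ = f zb + β * pen zb := by rw [hpen zb hzbOpt.1]; ring
    _ ≤ f w + β * pen w := hzb.2 w hw
end
end
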